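/- For all α, β ∈ ℕ, the inclusion G ⊆ 𝔾 induces a bijection of double coset spaces K[α]\G/K[β] → 𝕂[α]\𝔾/𝕂[β]. Concretely: (i) every double coset 𝕂[α]·g·𝕂[β] with g ∈ 𝔾 contains an element of G; and (ii) for p, q ∈ G, 𝕂[α]·p·𝕂[β] = 𝕂[α]·q·𝕂[β] if and only if K[α]·p·K[β] = K[α]·q·K[β]. -/

import Mathlib

open Equiv

abbrev P3 := Equiv.Perm ℕ × Equiv.Perm ℕ × Equiv.Perm ℕ

/-- The subgroup of finitely supported permutations of `ℕ`. -/
def Sinf : Subgroup (Equiv.Perm ℕ) where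
  carrier := {g | {x | g x ≠ x}.Finite}
  one_mem' := by
    show Set.Finite {x | (1 : Equiv.Perm ℕ) x ≠ x}
    convert Set.finite_empty
    ext x; simp
  mul_mem' {f g} hf hg := by
    apply Set.Finite.subset (hf.union hg)
    intro x hx
    simp only [Set.mem_setOf_eq, Set.mem_union, Equiv.Perm.mul_apply] at hx ⊢
    by_contra hc
    push_neg at hc
    rw [hc.2] at hx
    exact hx hc.1
  inv_mem' {g} hg := by
    apply Set.Finite.subset hg
    intro x hx
    simp only [Set.mem_setOf_eq] at hx ⊢
    intro h
    apply hx
    apply g.injective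
    rw [show ∀ y, g (g⁻¹ y) = y from g.apply_symm_apply, h]

/-- Permutations fixing every point `< α`. -/
def fixLt (α : ℕ) : Subgroup (Equiv.Perm ℕ) where
  carrier := {g | ∀ i < α, g i = i}
  one_mem' := fun _ _ => rfl
  mul_mem' {f g} hf hg := fun i hi => by
    simp only [Equiv.Perm.mul_apply, hg i hi, hf i hi]
  inv_mem' {g} hg := fun i hi => by
    apply g.injective
    rw [show ∀ y, g (g⁻¹ y) = y from g.apply_symm_apply, hg i hi]

/-- The diagonal embedding of `Perm ℕ` into the triple product. -/
def diag3 : Equiv.Perm ℕ →* P3 where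
  toFun h := (h, h, h)
  map_one' := rfl
  map_mul' _ _ := rfl

/-- `G = S_∞ × S_∞ × S_∞`. -/
def Ggrp : Subgroup P3 := Sinf.prod (Sinf.prod Sinf)

/-- `K[α]`: diagonal triples `(h,h,h)` with `h ∈ S_∞` fixing `0,…,α-1`. -/
def KK (α : ℕ) : Subgroup P3 := Subgroup.map diag3 (Sinf ⊓ fixLt α)

/-- The double coset `L·p·M`. -/
def dcosOf (L M : Subgroup P3) (p : P3) : Set P3 :=
  {y | ∃ a ∈ L, ∃ b ∈ M, y = a * p * b}

/-- underlying function of `θ_j[β]`. -/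
def thetaFun (β j : ℕ) (x : ℕ) : ℕ :=
  if β ≤ x ∧ x < β + j then x + j
  else if β + j ≤ x ∧ x < β + 2 * j then x - j
  else x

lemma thetaFun_invol (β j : ℕ) : ∀ x, thetaFun β j (thetaFun β j x) = x := by
  intro x
  simp only [thetaFun]
  split_ifs <;> omega

/-- `θ_j[β]`: swaps the blocks `[β, β+j)` and `[β+j, β+2j)`. -/
def theta (β j : ℕ) : Equiv.Perm ℕ :=
  ⟨thetaFun β j, thetaFun β j, thetaFun_invol β j, thetaFun_invol β j⟩

lemma theta_mem_Sinf (β j : ℕ) : theta β j ∈ Sinf := by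
  apply Set.Finite.subset (Set.finite_Iio (β + 2 * j))
  intro x hx
  simp only [Set.mem_setOf_eq, theta, Equiv.coe_fn_mk, Set.mem_Iio] at hx ⊢
  by_contra hc
  push_neg at hc
  apply hx
  simp only [thetaFun]
  split_ifs <;> omega

/-- `Θ_j[β] = (θ_j[β], θ_j[β], θ_j[β])`. -/
def ThetaP (β j : ℕ) : P3 := diag3 (theta β j)

lemma KK_le_G {α : ℕ} : KK α ≤ Ggrp := by
  rintro g ⟨h, hh, rfl⟩
  exact ⟨hh.1, hh.1, hh.1⟩

lemma Theta_mem_G (β j : ℕ) : ThetaP β j ∈ Ggrp :=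
  ⟨theta_mem_Sinf β j, theta_mem_Sinf β j, theta_mem_Sinf β j⟩

lemma conj_mem_Sinf (g : Equiv.Perm ℕ) {f : Equiv.Perm ℕ} (hf : f ∈ Sinf) :
    g * f * g⁻¹ ∈ Sinf := by
  show Set.Finite {x | (g * f * g⁻¹) x ≠ x}
  apply Set.Finite.subset ((show Set.Finite {x | f x ≠ x} from hf).image g)
  intro x hx
  simp only [Set.mem_setOf_eq, Equiv.Perm.mul_apply] at hx
  refine ⟨g⁻¹ x, ?_, g.apply_symm_apply x⟩
  intro h
  apply hx
  rw [h, show ∀ y, g (g⁻¹ y) = y from g.apply_symm_apply]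

/-- The tri-symmetric group `𝔾 = {(p,q,r) : p q⁻¹ ∈ S_∞, q r⁻¹ ∈ S_∞}`. -/
def bigG : Subgroup P3 where
  carrier := {g | g.1 * g.2.1⁻¹ ∈ Sinf ∧ g.2.1 * g.2.2⁻¹ ∈ Sinf}
  one_mem' := by constructor <;> simpa using Sinf.one_mem
  mul_mem' {a b} ha hb := by
    constructor
    · have h : (a * b).1 * (a * b).2.1⁻¹
          = a.1 * (b.1 * b.2.1⁻¹) * a.1⁻¹ * (a.1 * a.2.1⁻¹) := by
        simp only [Prod.fst_mul, Prod.snd_mul]; group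
      rw [h]
      exact mul_mem (conj_mem_Sinf _ hb.1) ha.1
    · have h : (a * b).2.1 * (a * b).2.2⁻¹
          = a.2.1 * (b.2.1 * b.2.2⁻¹) * a.2.1⁻¹ * (a.2.1 * a.2.2⁻¹) := by
        simp only [Prod.fst_mul, Prod.snd_mul]; group
      rw [h]
      exact mul_mem (conj_mem_Sinf _ hb.2) ha.2
  inv_mem' {a} ha := by
    constructor
    · have h : (a⁻¹).1 * (a⁻¹).2.1⁻¹
          = a.1⁻¹ * (a.1 * a.2.1⁻¹)⁻¹ * (a.1⁻¹)⁻¹ := by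
        simp only [Prod.fst_inv, Prod.snd_inv]; group
      rw [h]
      exact conj_mem_Sinf _ (inv_mem ha.1)
    · have h : (a⁻¹).2.1 * (a⁻¹).2.2⁻¹
          = a.2.1⁻¹ * (a.2.1 * a.2.2⁻¹)⁻¹ * (a.2.1⁻¹)⁻¹ := by
        simp only [Prod.fst_inv, Prod.snd_inv]; group
      rw [h]
      exact conj_mem_Sinf _ (inv_mem ha.2)


/-- `𝕂[α] ≤ 𝔾`: diagonal triples `(h,h,h)` with `h ∈ Perm(ℕ)` fixing `0,…,α-1`. -/
def bigKK (α : ℕ) : Subgroup P3 := Subgroup.map diag3 (fixLt α)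

/-! Every element of `𝔾` is moved into `G` by a diagonal `(h,h,h)` with `h = s g₂⁻¹`, where
`s ∈ S_∞` agrees with `g₂` on the finite set `g₂⁻¹ {0,…,α-1}`. For (ii), if `p = (h,h,h) q (k,k,k)`
with arbitrary `h, k`, replace `h` by `s ∈ S_∞` agreeing with it on a finite set containing the
supports of `q₂ q₁⁻¹`, `q₃ q₁⁻¹`, the points `< α` and `q₁ {0,…,β-1}`: then `t = s⁻¹ h` commutes
with `q₂ q₁⁻¹` and `q₃ q₁⁻¹`, so it can be pushed through `q` to the right-hand factor. -/

lemma swap_mem_Sinf (a b : ℕ) : swap a b ∈ Sinf :=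
  (Set.toFinite {a, b}).subset fun x hx => by
    by_contra hab
    simp only [Set.mem_insert_iff, Set.mem_singleton_iff, not_or] at hab
    exact hx (swap_apply_of_ne_of_ne hab.1 hab.2)

lemma exists_mem_Sinf_eqOn (f : Perm ℕ) {T : Set ℕ} (hT : T.Finite) :
    ∃ s ∈ Sinf, Set.EqOn s f T := by
  classical
  lift T to Finset ℕ using hT
  induction T using Finset.induction_on with
  | empty => exact ⟨1, one_mem _, by simp⟩
  | insert a T ha ih =>
    obtain ⟨s, hs, hsT⟩ := ih
    refine ⟨swap (s a) (f a) * s, mul_mem (swap_mem_Sinf _ _) hs, fun x hx => ?_⟩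
    rcases Finset.mem_insert.mp hx with rfl | hxT
    · simp
    · have hxa : x ≠ a := fun h => ha (h ▸ hxT)
      rw [Perm.mul_apply, hsT hxT, swap_apply_of_ne_of_ne]
      · exact fun h => hxa (s.injective (hsT hxT ▸ h))
      · exact fun h => hxa (f.injective h)

lemma inv_mul_mem_Sinf {a b : Perm ℕ} (h : a * b⁻¹ ∈ Sinf) : b⁻¹ * a ∈ Sinf := by
  simpa [mul_assoc] using conj_mem_Sinf b⁻¹ h

lemma exists_diag3_mul_mem_Ggrp {g : P3} (hg : g ∈ bigG) (α : ℕ) :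
    ∃ h ∈ fixLt α, diag3 h * g ∈ Ggrp := by
  obtain ⟨s, hs, hsg⟩ := exists_mem_Sinf_eqOn g.2.1 ((Set.finite_Iio α).image ⇑g.2.1⁻¹)
  refine ⟨s * g.2.1⁻¹, fun i hi => ?_, ?_, ?_, ?_⟩
  · show s (g.2.1⁻¹ i) = i
    rw [hsg ⟨i, hi, rfl⟩]
    simp
  · show s * g.2.1⁻¹ * g.1 ∈ Sinf
    rw [mul_assoc]
    exact mul_mem hs (inv_mul_mem_Sinf hg.1)
  · show s * g.2.1⁻¹ * g.2.1 ∈ Sinf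
    rwa [inv_mul_cancel_right]
  · show s * g.2.1⁻¹ * g.2.2 ∈ Sinf
    rw [mul_assoc]
    exact mul_mem hs (inv_mul_mem_Sinf (by simpa using inv_mem hg.2))

lemma commute_of_fixes_support {X : Type*} {t u : Perm X} (ht : ∀ x, u x ≠ x → t x = x) :
    Commute t u :=
  Perm.Disjoint.commute fun x => (em (u x = x)).elim Or.inr fun hx => Or.inl (ht x hx)

lemma diag3_mul_eq_mul_diag3 {q : P3} {t : Perm ℕ} (h₂ : Commute t (q.2.1 * q.1⁻¹))
    (h₃ : Commute t (q.2.2 * q.1⁻¹)) : diag3 t * q = q * diag3 (q.1⁻¹ * t * q.1) := by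
  refine Prod.ext ?_ (Prod.ext ?_ ?_)
  · show t * q.1 = q.1 * (q.1⁻¹ * t * q.1)
    group
  · calc t * q.2.1 = t * (q.2.1 * q.1⁻¹) * q.1 := by group
      _ = q.2.1 * (q.1⁻¹ * t * q.1) := by rw [h₂.eq]; group
  · calc t * q.2.2 = t * (q.2.2 * q.1⁻¹) * q.1 := by group
      _ = q.2.2 * (q.1⁻¹ * t * q.1) := by rw [h₃.eq]; group

lemma mem_dcosOf_self (L M : Subgroup P3) (p : P3) : p ∈ dcosOf L M p :=
  ⟨1, one_mem L, 1, one_mem M, by group⟩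

lemma dcosOf_eq_of_mem {L M : Subgroup P3} {p q : P3} (h : p ∈ dcosOf L M q) :
    dcosOf L M p = dcosOf L M q := by
  obtain ⟨a, ha, b, hb, rfl⟩ := h
  ext y
  constructor
  · rintro ⟨a', ha', b', hb', rfl⟩
    exact ⟨a' * a, mul_mem ha' ha, b * b', mul_mem hb hb', by group⟩
  · rintro ⟨a', ha', b', hb', rfl⟩
    exact ⟨a' * a⁻¹, mul_mem ha' (inv_mem ha), b⁻¹ * b', mul_mem (inv_mem hb) hb', by group⟩

lemma dcosOf_eq_iff {L M : Subgroup P3} {p q : P3} :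
    dcosOf L M p = dcosOf L M q ↔ p ∈ dcosOf L M q :=
  ⟨fun h => h ▸ mem_dcosOf_self L M p, dcosOf_eq_of_mem⟩

lemma dcosOf_mono {L L' M M' : Subgroup P3} (hL : L ≤ L') (hM : M ≤ M') (p : P3) :
    dcosOf L M p ⊆ dcosOf L' M' p := fun _ ⟨a, ha, b, hb, hy⟩ => ⟨a, hL ha, b, hM hb, hy⟩

lemma KK_le_bigKK (α : ℕ) : KK α ≤ bigKK α :=
  Subgroup.map_mono inf_le_right

lemma mem_dcosOf_KK_of_mem_dcosOf_bigKK {α β : ℕ} {p q : P3} (hp : p ∈ Ggrp) (hq : q ∈ Ggrp)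
    (hpq : p ∈ dcosOf (bigKK α) (bigKK β) q) : p ∈ dcosOf (KK α) (KK β) q := by
  obtain ⟨_, ⟨h, hh, rfl⟩, _, ⟨k, hk, rfl⟩, rfl⟩ := hpq
  have hu₂ : {x | (q.2.1 * q.1⁻¹) x ≠ x}.Finite := Sinf.mul_mem hq.2.1 (Sinf.inv_mem hq.1)
  have hu₃ : {x | (q.2.2 * q.1⁻¹) x ≠ x}.Finite := Sinf.mul_mem hq.2.2 (Sinf.inv_mem hq.1)
  let T := {x | (q.2.1 * q.1⁻¹) x ≠ x} ∪ {x | (q.2.2 * q.1⁻¹) x ≠ x} ∪ Set.Iio α ∪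
    q.1 '' Set.Iio β
  have hT : T.Finite :=
    ((hu₂.union hu₃).union (Set.finite_Iio α)).union ((Set.finite_Iio β).image q.1)
  obtain ⟨s, hs, hsh⟩ := exists_mem_Sinf_eqOn h hT
  set t := s⁻¹ * h
  have ht : ∀ x ∈ T, t x = x := fun x hx => by
    show s⁻¹ (h x) = x
    rw [← hsh hx]
    simp
  have hst : diag3 h * q * diag3 k = diag3 s * q * diag3 (q.1⁻¹ * t * q.1 * k) := by
    rw [show h = s * t by simp [t], map_mul, mul_assoc (diag3 s), diag3_mul_eq_mul_diag3
      (commute_of_fixes_support fun x hx => ht x (.inl (.inl (.inl hx))))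
      (commute_of_fixes_support fun x hx => ht x (.inl (.inl (.inr hx))))]
    simp only [map_mul, mul_assoc]
  refine ⟨diag3 s, ⟨s, ⟨hs, fun i hi => ?_⟩, rfl⟩, _, ⟨_, ⟨?_, fun i hi => ?_⟩, rfl⟩, hst⟩
  · rw [hsh (.inl (.inr hi)), hh i hi]
  · have hk' : q.1⁻¹ * t * q.1 * k = q.1⁻¹ * s⁻¹ * (h * q.1 * k) := by
      simp only [t, mul_assoc]
    rw [hk']
    exact Sinf.mul_mem (Sinf.mul_mem (Sinf.inv_mem hq.1) (Sinf.inv_mem hs)) hp.1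
  · simp [hk i hi, ht _ (.inr ⟨i, hi, rfl⟩)]

/-- The inclusion `G ⊆ 𝔾` induces a bijection of double coset spaces
`K[α]\G/K[β] → 𝕂[α]\𝔾/𝕂[β]`: (i) every double coset `𝕂[α]·g·𝕂[β]`, `g ∈ 𝔾`, meets `G`;
(ii) two elements of `G` lie in the same `𝕂[α]–𝕂[β]` double coset iff they lie in the
same `K[α]–K[β]` double coset. -/
theorem doubleCosets_G_eq_doubleCosets_bigG (α β : ℕ) :
    (∀ g ∈ bigG, ∃ p ∈ Ggrp, p ∈ dcosOf (bigKK α) (bigKK β) g) ∧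
    (∀ p ∈ Ggrp, ∀ q ∈ Ggrp,
      (dcosOf (bigKK α) (bigKK β) p = dcosOf (bigKK α) (bigKK β) q ↔
        dcosOf (KK α) (KK β) p = dcosOf (KK α) (KK β) q)) := by
  refine ⟨fun g hg => ?_, fun p hp q hq => ?_⟩
  · obtain ⟨h, hh, hhg⟩ := exists_diag3_mul_mem_Ggrp hg α
    exact ⟨diag3 h * g, hhg, diag3 h, ⟨h, hh, rfl⟩, 1, one_mem _, (mul_one _).symm⟩
  · rw [dcosOf_eq_iff, dcosOf_eq_iff]
    exact ⟨mem_dcosOf_KK_of_mem_dcosOf_bigKK hp hq,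
      (dcosOf_mono (KK_le_bigKK α) (KK_le_bigKK β) q ·)⟩
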